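/- Let (P, ≤) be a partial order and let κ be an infinite cardinal (regarded as a well-ordered index set of ordinals α < κ). Suppose there is a family (D_α)_{α<κ} of subsets of P such that each D_α is open, dense, and closed under the equivalence ≈, and such that the intersection ⋂_{α<κ} D_α is not dense in P. Then player INC has a winning strategy in the game G(P, κ). -/

import Mathlib

/-!
INC fixes `p₀` such that no element of `⋂ α, D α` lies below `p₀`. In round `α` INC answers with
an element of `D α` below all previous moves and below `p₀`; by density of `D α` one exists whenever
the position has a lower bound below `p₀`. In the first round `p₀` itself is such a lower bound, so
every lower bound `q` of a full play lies below `p₀`, and then below INC's move in `D α` for every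
`α`. As the `D α` are open, `q ∈ ⋂ α, D α`, contradicting the choice of `p₀`.
-/
/-- Compatibility in a partial order (forcing convention): a common lower bound. -/
def OrdCompat {P : Type*} [PartialOrder P] (p q : P) : Prop := ∃ r, r ≤ p ∧ r ≤ q

/-- The equivalence `p ≈ q`: `p` and `q` are compatible with the same elements. -/
def OrdEquiv {P : Type*} [PartialOrder P] (p q : P) : Prop :=
  ∀ e, OrdCompat e p ↔ OrdCompat e q

/-- A strategy for player INC in the game `G(P, κ)`: it assigns to every round `α`
and every sequence of pairs of moves `(p_β^INC, p_β^COM)` for the rounds `β < α`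
an element of `P` (the move `p_α^INC`). -/
def Strategy (P ι : Type*) [LT ι] : Type _ :=
  ∀ α : ι, (∀ β : ι, β < α → P × P) → P

/-- A position (partial play before round `α`) is legal if within each round COM's
move is below INC's move, and each move is below all earlier moves. -/
def PartLegal {P ι : Type*} [PartialOrder P] [LT ι] {α : ι}
    (h : ∀ β : ι, β < α → P × P) : Prop :=
  (∀ β hβ, (h β hβ).2 ≤ (h β hβ).1) ∧
  ∀ β hβ γ hγ, β < γ → (h γ hγ).1 ≤ (h β hβ).2

/-- The full play `(f, g)` (INC playing `f α`, COM playing `g α`) follows the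
strategy `σ` of INC. -/
def Follows {P ι : Type*} [LT ι] (σ : Strategy P ι) (f g : ι → P) : Prop :=
  ∀ α : ι, f α = σ α fun β _ => (f β, g β)

/-- The full play `(f, g)` is legal: `p_α^INC ≥ p_α^COM ≥ p_β^INC ≥ p_β^COM`
for all `α < β`. -/
def Legal {P ι : Type*} [PartialOrder P] [LT ι] (f g : ι → P) : Prop :=
  (∀ α, g α ≤ f α) ∧ ∀ α β : ι, α < β → f β ≤ g α

/-- `σ` is a winning strategy for INC in the game `G(P, ι)`: at every legal
position at which some legal move exists, `σ` produces a legal move, and every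
full legal play following `σ` has no lower bound in `P` (plays that terminate
because INC has no legal move count as wins for INC). -/
def WinningINC {P ι : Type*} [PartialOrder P] [LT ι] (σ : Strategy P ι) : Prop :=
  (∀ (α : ι) (h : ∀ β : ι, β < α → P × P), PartLegal h →
    (∃ p : P, ∀ β hβ, p ≤ (h β hβ).1 ∧ p ≤ (h β hβ).2) →
    ∀ β hβ, σ α h ≤ (h β hβ).1 ∧ σ α h ≤ (h β hβ).2) ∧
  ∀ f g : ι → P, Follows σ f g → Legal f g → ¬∃ q : P, ∀ α, q ≤ f α ∧ q ≤ g α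

section DenseStrategy

variable {P ι : Type*} [PartialOrder P]

def BelowPosition [LT ι] {α : ι} (h : ∀ β : ι, β < α → P × P) (p : P) : Prop :=
  ∀ β hβ, p ≤ (h β hβ).1 ∧ p ≤ (h β hβ).2

open Classical in
noncomputable def denseStrategy [LT ι] (D : ι → Set P) (p₀ : P) : Strategy P ι := fun α h =>
  if h₁ : ∃ d ∈ D α, BelowPosition h d ∧ d ≤ p₀ then h₁.choose
  else if h₂ : ∃ d, BelowPosition h d then h₂.choose else p₀

section Position

variable [LT ι] {D : ι → Set P} {p₀ : P} {α : ι} {h : ∀ β : ι, β < α → P × P}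

theorem denseStrategy_mem (hdense : ∀ p, ∃ q ∈ D α, q ≤ p) {p : P} (hp : BelowPosition h p)
    (hp₀ : p ≤ p₀) : denseStrategy D p₀ α h ∈ D α ∧ denseStrategy D p₀ α h ≤ p₀ := by
  obtain ⟨d, hdD, hdp⟩ := hdense p
  have h₁ : ∃ d ∈ D α, BelowPosition h d ∧ d ≤ p₀ :=
    ⟨d, hdD, fun β hβ => ⟨hdp.trans (hp β hβ).1, hdp.trans (hp β hβ).2⟩, hdp.trans hp₀⟩
  rw [denseStrategy, dif_pos h₁]
  exact ⟨h₁.choose_spec.1, h₁.choose_spec.2.2⟩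

theorem denseStrategy_below (hex : ∃ p, BelowPosition h p) :
    BelowPosition h (denseStrategy D p₀ α h) := by
  rw [denseStrategy]
  split_ifs with h₁
  · exact h₁.choose_spec.2.1
  · exact hex.choose_spec

end Position

theorem winningINC_denseStrategy [Preorder ι] [WellFoundedLT ι] {D : ι → Set P} {p₀ : P}
    (hopen : ∀ α, IsLowerSet (D α)) (hdense : ∀ α, ∀ p, ∃ q ∈ D α, q ≤ p)
    (hp₀ : ∀ q ≤ p₀, q ∉ ⋂ α, D α) : WinningINC (denseStrategy D p₀) := by
  refine ⟨fun α h _ hex => denseStrategy_below hex, ?_⟩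
  rintro f g hfollows - ⟨q, hq⟩
  have hbelow : ∀ α, BelowPosition (fun β (_ : β < α) => (f β, g β)) q := fun _ β _ => hq β
  have hne : Set.univ.Nonempty (α := ι) := by
    obtain ⟨α, -⟩ := not_forall.mp (Set.mem_iInter.not.mp (hp₀ p₀ le_rfl))
    exact ⟨α, trivial⟩
  obtain ⟨α₀, -, hα₀⟩ := wellFounded_lt.has_min Set.univ hne
  have hqp₀ : q ≤ p₀ := by
    have hstart : BelowPosition (fun β (_ : β < α₀) => (f β, g β)) p₀ :=
      fun β hβ => absurd hβ (hα₀ β trivial)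
    refine (hq α₀).1.trans ?_
    rw [hfollows α₀]
    exact (denseStrategy_mem (hdense α₀) hstart le_rfl).2
  refine hp₀ q hqp₀ (Set.mem_iInter.mpr fun α => hopen α (hq α).1 ?_)
  rw [hfollows α]
  exact (denseStrategy_mem (hdense α) (hbelow α) hqp₀).1

end DenseStrategy

theorem inc_winning_of_intersection_not_dense {P : Type*} [PartialOrder P]
    (κ : Cardinal)
    (D : {α : Ordinal // α < κ.ord} → Set P)
    (hopen : ∀ α, ∀ p ∈ D α, ∀ q : P, q ≤ p → q ∈ D α)
    (hdense : ∀ α, ∀ p : P, ∃ q ∈ D α, q ≤ p)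
    (hnotdense : ¬ ∀ p : P, ∃ q ∈ ⋂ α, D α, q ≤ p) :
    ∃ σ : Strategy P {α : Ordinal // α < κ.ord}, WinningINC σ := by
  push Not at hnotdense
  obtain ⟨p₀, hp₀⟩ := hnotdense
  exact ⟨denseStrategy D p₀, winningINC_denseStrategy
    (fun α _ _ hle hmem => hopen α _ hmem _ hle) hdense fun q hq hmem => hp₀ q hmem hq⟩
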